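/- Let G = (V, E⃗) be a finite connected directed weighted graph satisfying the Kirchhoff assumption, and suppose A, B are subgraphs and U is a part of G such that V = V_A ⊔ V_B = V_{A°} ⊔ V_{B°} ⊔ V_U (disjoint unions), E⃗ = E⃗_A ⊔ E⃗_B ⊔ E⃗_U, and the edge boundaries of A and B both equal E⃗_U. Then for all 1 ≤ k, l ≤ min(#V_{A°}, #V_{B°}): λ_{k+l}(S_G) ≤ max( λ_k(S^D_{A°}), λ_l(S^D_{B°}) ), where eigenvalues are listed increasingly with multiplicity. -/

import Mathlib

/-!
Dirichlet eigenfunctions of `A°` and of `B°`, extended by zero, are orthonormal in `V` and,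
since no edge joins `A°` to `B°` (a neighbour of a vertex of `A°` lies in `A`, which misses
`B`), the quadratic form of `S_G` is diagonal on the `k + l` functions obtained from the
first `k` of `A°` and the first `l` of `B°`, with entries at most
`max(λ_k(S^D_{A°}), λ_l(S^D_{B°}))`.  The min-max principle for `S_G` then bounds
`λ_{k+l}(S_G)` by the same number.
-/

open Finset

/-- The weighted inner product `(f,g)_m = ∑_x m(x) f(x) conj(g(x))` on functions `W → ℂ`. -/
noncomputable def innerM {W : Type*} [Fintype W] (m : W → ℝ) (f g : W → ℂ) : ℂ :=
  ∑ x, (m x : ℂ) * f x * (starRingEnd ℂ) (g x)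

/-- The self-adjoint operator `S f(x) = (1/m(x)) ∑_y a(x,y) (f(x) - f(y))`, where
`a(x,y) = b(x,y) + b(y,x)`. -/
noncomputable def opS {W : Type*} [Fintype W] (m : W → ℝ) (b : W → W → ℝ)
    (f : W → ℂ) (x : W) : ℂ :=
  (1 / (m x : ℂ)) * ∑ y, ((b x y + b y x : ℝ) : ℂ) * (f x - f y)

/-- `μ : Fin N → ℝ` lists, increasingly and with multiplicity, eigenvalues of the operator
`S` which is self-adjoint for the weighted inner product with weight `m`: `μ` is monotone
and there is a corresponding `m`-orthonormal family of eigenfunctions.  When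
`N = dim = card W`, such a family is an orthonormal basis, so `μ` is exactly the increasing
enumeration `λ_1 ≤ … ≤ λ_N` of the eigenvalues of `S` with multiplicity. -/
def IsMonoEigenListing {W : Type*} [Fintype W] (m : W → ℝ)
    (S : (W → ℂ) → (W → ℂ)) {N : ℕ} (μ : Fin N → ℝ) : Prop :=
  Monotone μ ∧ ∃ u : Fin N → (W → ℂ),
    (∀ i j, innerM m (u i) (u j) = if i = j then 1 else 0) ∧
    ∀ i, S (u i) = fun x => ((μ i : ℝ) : ℂ) * u i x

/-- `x` and `y` are neighbours in the directed weighted graph with edge weight `b`. -/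
def Nbr {V : Type*} (b : V → V → ℝ) (x y : V) : Prop := 0 < b x y ∨ 0 < b y x

/-- Kirchhoff assumption: `β⁺(x) = β⁻(x)` for all `x`. -/
def Kirchhoff {V : Type*} [Fintype V] (b : V → V → ℝ) : Prop :=
  ∀ x, ∑ y, b x y = ∑ y, b y x

/-- The graph with edge weight `b` is connected, ignoring orientation. -/
def ConnectedGraph {V : Type*} (b : V → V → ℝ) : Prop :=
  ∀ x y : V, Relation.ReflTransGen (Nbr b) x y

/-- The subgraph of `b` induced on `U` is connected, ignoring orientation. -/
def ConnOn {V : Type*} (b : V → V → ℝ) (U : Finset V) : Prop :=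
  ∀ x ∈ U, ∀ y ∈ U,
    Relation.ReflTransGen (fun u v => u ∈ U ∧ v ∈ U ∧ Nbr b u v) x y

/-- The interior of a set of vertices: those of its vertices all of whose neighbours lie
in the set. -/
def interiorSet {V : Type*} (b : V → V → ℝ) (Ω : Set V) : Set V :=
  {x | x ∈ Ω ∧ ∀ y, Nbr b x y → y ∈ Ω}

/-- The operator `S_H` of the subgraph induced on `U` (weights restricted from the ambient
graph), acting on functions `↥U → ℂ`. -/
noncomputable def opSsub {V : Type*} [Fintype V] (m : V → ℝ) (b : V → V → ℝ)
    (U : Finset V) : (↥U → ℂ) → (↥U → ℂ) :=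
  opS (fun x : ↥U => m ↑x) (fun x y : ↥U => b ↑x ↑y)

/-- The Dirichlet operator `S^D_U`, acting on functions supported in `U` (identified with
functions `↥U → ℂ`, extended by zero): `S^D_U f(x) = (1/m(x)) ∑_{y ∈ V} a(x,y)(f(x)-f(y))`
for `x ∈ U`. -/
noncomputable def opSDir {V : Type*} [Fintype V] [DecidableEq V] (m : V → ℝ) (b : V → V → ℝ)
    (U : Finset V) (f : ↥U → ℂ) (x : ↥U) : ℂ :=
  (1 / (m ↑x : ℂ)) * ∑ y : V, ((b ↑x y + b y ↑x : ℝ) : ℂ) *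
    (f x - (if h : y ∈ U then f ⟨y, h⟩ else 0))

/-- The Dirichlet Laplacian `Δ^D_U`, acting on functions supported in `U`:
`Δ^D_U f(x) = (1/m(x)) ∑_{y ∈ V} b(x,y)(f(x)-f(y))` for `x ∈ U`. -/
noncomputable def opDeltaDir {V : Type*} [Fintype V] [DecidableEq V] (m : V → ℝ) (b : V → V → ℝ)
    (U : Finset V) (f : ↥U → ℂ) (x : ↥U) : ℂ :=
  (1 / (m ↑x : ℂ)) * ∑ y : V, ((b ↑x y : ℝ) : ℂ) *
    (f x - (if h : y ∈ U then f ⟨y, h⟩ else 0))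

section WeightedInner

variable {W : Type*} [Fintype W] (m : W → ℝ) {ι : Type*}

lemma innerM_sum_smul_left [Fintype ι] (c : ι → ℂ) (g : ι → W → ℂ) (h : W → ℂ) :
    innerM m (∑ s, c s • g s) h = ∑ s, c s * innerM m (g s) h := by
  simp only [innerM, Finset.sum_apply, Pi.smul_apply, smul_eq_mul, Finset.mul_sum,
    Finset.sum_mul]
  rw [Finset.sum_comm]
  exact Finset.sum_congr rfl fun s _ => Finset.sum_congr rfl fun x _ => by ring

lemma innerM_sum_smul_right [Fintype ι] (c : ι → ℂ) (g : ι → W → ℂ) (h : W → ℂ) :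
    innerM m h (∑ s, c s • g s) = ∑ s, starRingEnd ℂ (c s) * innerM m h (g s) := by
  simp only [innerM, Finset.sum_apply, Pi.smul_apply, smul_eq_mul, map_sum, map_mul,
    Finset.mul_sum]
  rw [Finset.sum_comm]
  exact Finset.sum_congr rfl fun s _ => Finset.sum_congr rfl fun x _ => by ring

lemma exists_ne_zero_innerM_sum_smul_eq_zero [Fintype ι] {κ : Type*} [Fintype κ]
    (w : ι → W → ℂ) (v : κ → W → ℂ) (hcard : Fintype.card κ < Fintype.card ι) :
    ∃ c : ι → ℂ, c ≠ 0 ∧ ∀ j, innerM m (∑ s, c s • w s) (v j) = 0 := by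
  let M : Matrix κ ι ℂ := fun j s => innerM m (w s) (v j)
  obtain ⟨c, hc, hc0⟩ := Submodule.exists_mem_ne_zero_of_ne_bot
    (M.mulVecLin.ker_ne_bot_of_finrank_lt (by simpa using hcard))
  refine ⟨c, hc0, fun j => ?_⟩
  have := congrFun (LinearMap.mem_ker.1 hc) j
  rw [Matrix.mulVecLin_apply] at this
  simpa [innerM_sum_smul_left, M, Matrix.mulVec, dotProduct, mul_comm] using this

/-- `w` diagonalises the form `(T f, g)_m` with diagonal `d`; for `T = id` and `d = 1`
this is `m`-orthonormality. -/
def IsDiagonalFamily [DecidableEq ι] (T : (W → ℂ) → (W → ℂ)) (w : ι → W → ℂ) (d : ι → ℝ) :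
    Prop :=
  ∀ s t, innerM m (T (w s)) (w t) = if s = t then (d s : ℂ) else 0

variable {m} [DecidableEq ι]

lemma IsDiagonalFamily.comp {T : (W → ℂ) → (W → ℂ)} {w : ι → W → ℂ} {d : ι → ℝ}
    (h : IsDiagonalFamily m T w d) {κ : Type*} [DecidableEq κ] {σ : κ → ι}
    (hσ : Function.Injective σ) : IsDiagonalFamily m T (w ∘ σ) (d ∘ σ) := fun s t => by
  simp only [Function.comp_apply, h (σ s) (σ t), hσ.eq_iff]

lemma IsDiagonalFamily.sumElim {T : (W → ℂ) → (W → ℂ)} {κ : Type*} [DecidableEq κ]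
    {g : ι → W → ℂ} {h : κ → W → ℂ} {d : ι → ℝ} {e : κ → ℝ}
    (hg : IsDiagonalFamily m T g d) (hh : IsDiagonalFamily m T h e)
    (hgh : ∀ s t, innerM m (T (g s)) (h t) = 0) (hhg : ∀ s t, innerM m (T (h s)) (g t) = 0) :
    IsDiagonalFamily m T (Sum.elim g h) (Sum.elim d e) := by
  rintro (s | s) (t | t)
  · simpa using hg s t
  · simpa using hgh s t
  · simpa using hhg s t
  · simpa using hh s t

lemma IsDiagonalFamily.innerM_sum_smul [Fintype ι] {T : (W → ℂ) →ₗ[ℂ] (W → ℂ)}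
    {w : ι → W → ℂ} {d : ι → ℝ} (h : IsDiagonalFamily m T w d) (c : ι → ℂ) :
    innerM m (T (∑ s, c s • w s)) (∑ s, c s • w s)
      = ((∑ s, d s * Complex.normSq (c s) : ℝ) : ℂ) := by
  simp only [IsDiagonalFamily] at h
  simp only [map_sum, map_smul, innerM_sum_smul_left, innerM_sum_smul_right, h, mul_ite,
    mul_zero, Finset.sum_ite_eq', Finset.mem_univ, if_true]
  push_cast
  refine Finset.sum_congr rfl fun s _ => ?_
  rw [← Complex.mul_conj]
  ring

lemma IsDiagonalFamily.innerM_sum_smul_self [Fintype ι] {w : ι → W → ℂ}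
    (h : IsDiagonalFamily m id w 1) (c : ι → ℂ) (t : ι) :
    innerM m (∑ s, c s • w s) (w t) = c t := by
  simp only [IsDiagonalFamily, id, Pi.one_apply, Complex.ofReal_one] at h
  simp [innerM_sum_smul_left, h]

lemma IsDiagonalFamily.linearIndependent [Fintype ι] {w : ι → W → ℂ}
    (h : IsDiagonalFamily m id w 1) : LinearIndependent ℂ w := by
  classical
  refine linearIndependent_iff'.2 fun s c hsum t ht => ?_
  have := h.innerM_sum_smul_self (fun i => if i ∈ s then c i else 0) t
  simp only [ite_smul, zero_smul, Finset.sum_ite_mem, Finset.univ_inter, hsum, if_pos ht]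
    at this
  simpa [innerM] using this.symm

lemma IsDiagonalFamily.eq_sum_innerM_smul [Fintype ι] {w : ι → W → ℂ}
    (h : IsDiagonalFamily m id w 1) (hcard : Fintype.card ι = Fintype.card W) (f : W → ℂ) :
    f = ∑ t, innerM m f (w t) • w t := by
  classical
  let e := basisOfLinearIndependentOfCardEqFinrank' w h.linearIndependent
    (by simpa using hcard)
  have hf := e.sum_repr f
  simp only [e, coe_basisOfLinearIndependentOfCardEqFinrank'] at hf
  conv_rhs => rw [← hf]
  simp_rw [h.innerM_sum_smul_self]
  exact hf.symm

end WeightedInner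

noncomputable def opSLinear {W : Type*} [Fintype W] (m : W → ℝ) (b : W → W → ℝ) :
    (W → ℂ) →ₗ[ℂ] (W → ℂ) where
  toFun := opS m b
  map_add' f g := by
    funext x
    simp only [opS, Pi.add_apply, ← mul_add, ← Finset.sum_add_distrib]
    congr 1
    exact Finset.sum_congr rfl fun y _ => by ring
  map_smul' c f := by
    funext x
    simp only [opS, Pi.smul_apply, smul_eq_mul, RingHom.id_apply, Finset.mul_sum]
    exact Finset.sum_congr rfl fun y _ => by ring

lemma IsMonoEigenListing.exists_isDiagonalFamily {W : Type*} [Fintype W] {m : W → ℝ}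
    {S : (W → ℂ) → (W → ℂ)} {N : ℕ} {μ : Fin N → ℝ} (hμ : IsMonoEigenListing m S μ) :
    Monotone μ ∧ ∃ u : Fin N → W → ℂ, IsDiagonalFamily m id u 1 ∧ IsDiagonalFamily m S u μ := by
  obtain ⟨hmono, u, hu, heig⟩ := hμ
  refine ⟨hmono, u, fun i j => by simpa using hu i j, fun i j => ?_⟩
  have : innerM m (S (u i)) (u j) = μ i * innerM m (u i) (u j) := by
    simp only [heig, innerM, Finset.mul_sum]
    exact Finset.sum_congr rfl fun x _ => by ring
  rw [this, hu, mul_ite, mul_one, mul_zero]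

/-- Min-max: a nonzero combination of the `w s` orthogonal to the eigenfunctions below `i`
has Rayleigh quotient at least `μ i` and at most `c`. -/
theorem IsMonoEigenListing.le_of_isDiagonalFamily {W : Type*} [Fintype W] {m : W → ℝ}
    {S : (W → ℂ) →ₗ[ℂ] (W → ℂ)} {n : ℕ} {μ : Fin n → ℝ} (hμ : IsMonoEigenListing m S μ)
    (hn : n = Fintype.card W) {ι : Type*} [Fintype ι] [DecidableEq ι] {w : ι → W → ℂ}
    {ρ : ι → ℝ} (hw : IsDiagonalFamily m id w 1) (hSw : IsDiagonalFamily m S w ρ) {c : ℝ}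
    (hρc : ∀ s, ρ s ≤ c) (i : Fin n) (hi : (i : ℕ) < Fintype.card ι) : μ i ≤ c := by
  obtain ⟨hmono, e, he, hSe⟩ := hμ.exists_isDiagonalFamily
  obtain ⟨x, hx0, hxe⟩ := exists_ne_zero_innerM_sum_smul_eq_zero m w
    (fun j : Fin i => e (Fin.castLE i.isLt.le j)) (by simpa using hi)
  set f := ∑ s, x s • w s
  set a : Fin n → ℂ := fun t => innerM m f (e t)
  have hfa : f = ∑ t, a t • e t := he.eq_sum_innerM_smul (by simp [hn]) f
  have ha : ∀ t : Fin n, t < i → a t = 0 := fun t ht => hxe ⟨t, ht⟩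
  have hnorm : ∑ s, Complex.normSq (x s) = ∑ t, Complex.normSq (a t) := by
    have h₁ := IsDiagonalFamily.innerM_sum_smul (T := LinearMap.id) hw x
    have h₂ := IsDiagonalFamily.innerM_sum_smul (T := LinearMap.id) he a
    simp only [LinearMap.id_apply, Pi.one_apply, one_mul, ← hfa] at h₁ h₂
    exact_mod_cast h₁.symm.trans h₂
  have hform : ∑ s, ρ s * Complex.normSq (x s) = ∑ t, μ t * Complex.normSq (a t) := by
    have h₁ := hSw.innerM_sum_smul x
    have h₂ := hSe.innerM_sum_smul a
    rw [← hfa] at h₂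
    exact_mod_cast h₁.symm.trans h₂
  have hpos : 0 < ∑ s, Complex.normSq (x s) := by
    obtain ⟨s, hs⟩ := Function.ne_iff.mp hx0
    exact Finset.sum_pos' (fun s _ => Complex.normSq_nonneg _)
      ⟨s, Finset.mem_univ _, Complex.normSq_pos.mpr hs⟩
  refine le_of_mul_le_mul_right ?_ hpos
  calc μ i * ∑ s, Complex.normSq (x s) = ∑ t, μ i * Complex.normSq (a t) := by
        rw [hnorm, Finset.mul_sum]
    _ ≤ ∑ t, μ t * Complex.normSq (a t) := by
        refine Finset.sum_le_sum fun t _ => ?_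
        rcases lt_or_ge t i with ht | ht
        · simp [ha t ht]
        · exact mul_le_mul_of_nonneg_right (hmono ht) (Complex.normSq_nonneg _)
    _ = ∑ s, ρ s * Complex.normSq (x s) := hform.symm
    _ ≤ c * ∑ s, Complex.normSq (x s) := by
        rw [Finset.mul_sum]
        exact Finset.sum_le_sum fun s _ =>
          mul_le_mul_of_nonneg_right (hρc s) (Complex.normSq_nonneg _)

section ExtendByZero

variable {V : Type*} [DecidableEq V]

/-- Identifies `↥U → ℂ`, the domain of `opSDir m b U`, with the functions on `V` supported
in `U`. -/
def extendByZero (U : Finset V) (g : ↥U → ℂ) (x : V) : ℂ :=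
  if hx : x ∈ U then g ⟨x, hx⟩ else 0

@[simp]
lemma extendByZero_coe (U : Finset V) (g : ↥U → ℂ) (x : ↥U) : extendByZero U g x = g x := by
  rw [extendByZero, dif_pos x.2]

lemma extendByZero_of_notMem {U : Finset V} (g : ↥U → ℂ) {x : V} (hx : x ∉ U) :
    extendByZero U g x = 0 := dif_neg hx

variable [Fintype V] (m : V → ℝ)

lemma innerM_extendByZero_right (U : Finset V) (F : V → ℂ) (h : ↥U → ℂ) :
    innerM m F (extendByZero U h) = innerM (fun x : ↥U => m x) (fun x => F x) h := by
  simp only [innerM]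
  rw [← Finset.sum_subset (Finset.subset_univ U) fun x _ hx => by
      rw [extendByZero_of_notMem h hx, map_zero, mul_zero], ← Finset.sum_coe_sort U]
  exact Finset.sum_congr rfl fun x _ => by rw [extendByZero_coe]

lemma innerM_extendByZero (U : Finset V) (g h : ↥U → ℂ) :
    innerM m (extendByZero U g) (extendByZero U h) = innerM (fun x : ↥U => m x) g h := by
  simp only [innerM_extendByZero_right, extendByZero_coe]

lemma innerM_extendByZero_of_disjoint {P Q : Finset V} (hPQ : Disjoint P Q)
    (g : ↥P → ℂ) (h : ↥Q → ℂ) : innerM m (extendByZero P g) (extendByZero Q h) = 0 := by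
  rw [innerM_extendByZero_right]
  refine Finset.sum_eq_zero fun x _ => ?_
  dsimp only
  rw [extendByZero_of_notMem g (Finset.disjoint_right.1 hPQ x.2), mul_zero, zero_mul]

lemma opS_extendByZero_coe (b : V → V → ℝ) (U : Finset V) (g : ↥U → ℂ)
    (x : ↥U) : opS m b (extendByZero U g) x = opSDir m b U g x := by
  simp only [opS, opSDir, extendByZero_coe]
  rfl

lemma innerM_opS_extendByZero (b : V → V → ℝ) (U : Finset V) (g h : ↥U → ℂ) :
    innerM m (opS m b (extendByZero U g)) (extendByZero U h)
      = innerM (fun x : ↥U => m x) (opSDir m b U g) h := by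
  simp only [innerM_extendByZero_right, opS_extendByZero_coe]

lemma opS_extendByZero_of_notMem {b : V → V → ℝ} {P : Finset V} (g : ↥P → ℂ)
    {x : V} (hx : x ∉ P) (hxP : ∀ y ∈ P, b x y + b y x = 0) :
    opS m b (extendByZero P g) x = 0 := by
  simp only [opS, extendByZero_of_notMem g hx]
  refine mul_eq_zero_of_right _ (Finset.sum_eq_zero fun y _ => ?_)
  by_cases hy : y ∈ P
  · rw [hxP y hy, Complex.ofReal_zero, zero_mul]
  · rw [extendByZero_of_notMem g hy, sub_zero, mul_zero]

lemma innerM_opS_extendByZero_of_decoupled {b : V → V → ℝ} {P Q : Finset V}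
    (hPQ : Disjoint P Q) (hdec : ∀ x ∈ Q, ∀ y ∈ P, b x y + b y x = 0)
    (g : ↥P → ℂ) (h : ↥Q → ℂ) :
    innerM m (opS m b (extendByZero P g)) (extendByZero Q h) = 0 := by
  rw [innerM_extendByZero_right]
  refine Finset.sum_eq_zero fun x _ => ?_
  dsimp only
  rw [opS_extendByZero_of_notMem m g (Finset.disjoint_right.1 hPQ x.2) (hdec x x.2),
    mul_zero, zero_mul]

lemma isDiagonalFamily_sumElim_extendByZero {b : V → V → ℝ} {P Q : Finset V}
    (hPQ : Disjoint P Q) (hdec : ∀ x ∈ P, ∀ y ∈ Q, b x y + b y x = 0)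
    {ι κ : Type*} [DecidableEq ι] [DecidableEq κ] {u : ι → ↥P → ℂ} {v : κ → ↥Q → ℂ}
    {μ : ι → ℝ} {ν : κ → ℝ}
    (hu : IsDiagonalFamily (fun x : ↥P => m x) id u 1)
    (hSu : IsDiagonalFamily (fun x : ↥P => m x) (opSDir m b P) u μ)
    (hv : IsDiagonalFamily (fun x : ↥Q => m x) id v 1)
    (hSv : IsDiagonalFamily (fun x : ↥Q => m x) (opSDir m b Q) v ν) :
    IsDiagonalFamily m id (Sum.elim (extendByZero P ∘ u) (extendByZero Q ∘ v)) 1 ∧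
      IsDiagonalFamily m (opS m b)
        (Sum.elim (extendByZero P ∘ u) (extendByZero Q ∘ v)) (Sum.elim μ ν) := by
  constructor
  · rw [← Sum.elim_one_one]
    refine IsDiagonalFamily.sumElim (fun s t => ?_) (fun s t => ?_) (fun s t => ?_)
      (fun s t => ?_)
    · simpa [innerM_extendByZero] using hu s t
    · simpa [innerM_extendByZero] using hv s t
    · exact innerM_extendByZero_of_disjoint m hPQ _ _
    · exact innerM_extendByZero_of_disjoint m hPQ.symm _ _
  · refine IsDiagonalFamily.sumElim (fun s t => ?_) (fun s t => ?_) (fun s t => ?_)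
      (fun s t => ?_)
    · simpa [innerM_opS_extendByZero] using hSu s t
    · simpa [innerM_opS_extendByZero] using hSv s t
    · exact innerM_opS_extendByZero_of_decoupled m hPQ
        (fun x hx y hy => by rw [add_comm]; exact hdec y hy x hx) _ _
    · exact innerM_opS_extendByZero_of_decoupled m hPQ.symm hdec _ _

end ExtendByZero

lemma add_eq_zero_of_mem_interiorSet {V : Type*} {b : V → V → ℝ} (hb : ∀ x y, 0 ≤ b x y)
    {A B : Set V} (hAB : Disjoint A B) {x y : V} (hx : x ∈ interiorSet b A) (hy : y ∈ B) :
    b x y + b y x = 0 := by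
  have hxy : ¬ Nbr b x y := fun h => hAB.notMem_of_mem_left (hx.2 y h) hy
  simp only [Nbr, not_or, not_lt] at hxy
  linarith [hb x y, hb y x]

/-- let `G = (V, E⃗)` be a finite connected directed weighted graph
satisfying the Kirchhoff assumption, `A`, `B` subgraphs and `U = (V_U, E⃗_U)` a part of `G`
such that `V = V_A ⊔ V_B = V_{A°} ⊔ V_{B°} ⊔ V_U`, `E⃗ = E⃗_A ⊔ E⃗_B ⊔ E⃗_U`, and
`∂_E A = ∂_E B = E⃗_U`.  Then for all `1 ≤ k, l ≤ min(#V_{A°}, #V_{B°})`,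
`λ_{k+l}(S_G) ≤ max(λ_k(S^D_{A°}), λ_l(S^D_{B°}))`. -/
theorem stmt19 {V : Type*} [Fintype V] [DecidableEq V] (m : V → ℝ) (b : V → V → ℝ)
    (hb : ∀ x y, 0 ≤ b x y)
    (A B : Finset V)
    -- `Aint`, `Bint` are the interiors `A°`, `B°`
    (Aint Bint : Finset V)
    (hAint : (↑Aint : Set V) = interiorSet b ↑A)
    (hBint : (↑Bint : Set V) = interiorSet b ↑B)
    -- (1) `V = V_A ⊔ V_B = V_{A°} ⊔ V_{B°} ⊔ V_U`
    (hABdisj : Disjoint A B)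
    (hIntDisj1 : Disjoint Aint Bint)
    (n na nb : ℕ) (hn : n = Fintype.card V)
    (hsum : na + nb ≤ n)
    (μG : Fin n → ℝ) (μA : Fin na → ℝ) (μB : Fin nb → ℝ)
    (hμG : IsMonoEigenListing m (opS m b) μG)
    (hμA : IsMonoEigenListing (fun x : ↥Aint => m ↑x) (opSDir m b Aint) μA)
    (hμB : IsMonoEigenListing (fun x : ↥Bint => m ↑x) (opSDir m b Bint) μB) :
    ∀ (k l : ℕ) (hk1 : 1 ≤ k) (hl1 : 1 ≤ l)
      (hk : k ≤ min na nb) (hl : l ≤ min na nb),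
      μG ⟨k + l - 1, by
          have h1 := hk.trans (min_le_left na nb)
          have h2 := hl.trans (min_le_right na nb)
          omega⟩ ≤
        max (μA ⟨k - 1, by have h1 := hk.trans (min_le_left na nb); omega⟩)
            (μB ⟨l - 1, by have h2 := hl.trans (min_le_right na nb); omega⟩) := by
  intro k l hk1 _ hk hl
  have hkA : k ≤ na := hk.trans (min_le_left na nb)
  have hlB : l ≤ nb := hl.trans (min_le_right na nb)
  obtain ⟨hmonoA, uA, huA, hSuA⟩ := hμA.exists_isDiagonalFamily
  obtain ⟨hmonoB, uB, huB, hSuB⟩ := hμB.exists_isDiagonalFamily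
  have hdec : ∀ x ∈ Aint, ∀ y ∈ Bint, b x y + b y x = 0 := fun x hx y hy =>
    add_eq_zero_of_mem_interiorSet hb (Finset.disjoint_coe.2 hABdisj)
      (hAint ▸ Finset.mem_coe.2 hx) (hBint ▸ Finset.mem_coe.2 hy).1
  obtain ⟨hw, hSw⟩ := isDiagonalFamily_sumElim_extendByZero m hIntDisj1 hdec
    (huA.comp (σ := Fin.castLE hkA) (Fin.castLE_injective hkA))
    (hSuA.comp (σ := Fin.castLE hkA) (Fin.castLE_injective hkA))
    (huB.comp (σ := Fin.castLE hlB) (Fin.castLE_injective hlB))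
    (hSuB.comp (σ := Fin.castLE hlB) (Fin.castLE_injective hlB))
  refine hμG.le_of_isDiagonalFamily (S := opSLinear m b) hn hw hSw ?_ _
    (by simp only [Fintype.card_sum, Fintype.card_fin]; omega)
  rintro (s | s)
  · exact (hmonoA (Fin.le_def.2 (by simp only [Fin.val_castLE]; omega))).trans (le_max_left _ _)
  · exact (hmonoB (Fin.le_def.2 (by simp only [Fin.val_castLE]; omega))).trans (le_max_right _ _)
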